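/- arXiv:1809.01759 — 2 statements merged into one kernel-verified Lean document; each statement's English description precedes it below -/
import Mathlib

section
/- There is an absolute constant C such that for every integer k ≥ 2 and every n divisible by k, there exists a binary search tree T on [n] with F^k_T(S_k) ≤ C·n, where S_k is the tilted-grid sequence of length n. -/
/-- Binary trees with node labels of type `α`. -/
inductive BTree (α : Type) : Type where
  | leaf : BTree α
  | node : BTree α → α → BTree α → BTree α

namespace BTree

variable {α : Type} [LinearOrder α]

/-- The set of keys (node labels) of a binary tree. -/
def keys : BTree α → Finset α
  | .leaf => ∅
  | .node l x r => insert x (keys l ∪ keys r)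

/-- The binary-search-tree property: every node's label is greater than all labels
in its left subtree and smaller than all labels in its right subtree. -/
def IsBST : BTree α → Prop
  | .leaf => True
  | .node l x r => (∀ y ∈ keys l, y < x) ∧ (∀ y ∈ keys r, x < y) ∧ IsBST l ∧ IsBST r

/-- Depth (edge-distance from the root) of the node labeled `a` in a BST. -/
def depth : BTree α → α → ℕ
  | .leaf, _ => 0
  | .node l x r, a => if a = x then 0 else if a < x then depth l a + 1 else depth r a + 1

/-- Edge-distance between the nodes labeled `a` and `b` in a BST. -/
def dist : BTree α → α → α → ℕ
  | .leaf, _, _ => 0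
  | .node l x r, a, b =>
      if a = b then 0
      else if a < x ∧ b < x then dist l a b
      else if x < a ∧ x < b then dist r a b
      else depth (node l x r) a + depth (node l x r) b

/-- The key at the root, if any. -/
def root? : BTree α → Option α
  | .leaf => none
  | .node _ x _ => some x

end BTree

/-- `fingerPos X f init i t` is the position of finger `i` just before (0-indexed) time `t`:
the initial position `init i` if finger `i` has served no access so far, and otherwise
the last key it served. Here `f s` is the finger serving the access `X s`. -/
def fingerPos {α : Type} {k : ℕ} (X : ℕ → α) (f : ℕ → Fin k) (init : Fin k → α)
    (i : Fin k) : ℕ → α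
  | 0 => init i
  | t + 1 => if f t = i then X t else fingerPos X f init i t

/-- The cost of the `k`-finger strategy `(f, init)` serving the accesses
`X 0, …, X (m-1)` in the tree `T`: at each time we pay `1` plus the distance
travelled by the serving finger. -/
def fingerCost {α : Type} [LinearOrder α] (T : BTree α) (k m : ℕ) (X : ℕ → α)
    (f : ℕ → Fin k) (init : Fin k → α) : ℕ :=
  ∑ t ∈ Finset.range m, (1 + T.dist (fingerPos X f init (f t) t) (X t))

/-- `F^k_T(X)`: the optimal cost of serving `X 0, …, X (m-1)` in `T` with `k` fingers. -/
noncomputable def fingerOpt {α : Type} [LinearOrder α] (T : BTree α) (k m : ℕ)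
    (X : ℕ → α) : ℕ :=
  sInf {c : ℕ | ∃ (f : ℕ → Fin k) (init : Fin k → α), fingerCost T k m X f init = c}

/-- The tilted-grid sequence `S_k ∈ [k·l]^{k·l}` (1-indexed):
`S_k((p−1)k + b) = (b−1)·l + p` for `p ∈ {1,…,l}` and `b ∈ {1,…,k}`. -/
def tiltedGrid (k l : ℕ) (t : ℕ) : ℕ := ((t - 1) % k) * l + (t - 1) / k + 1

/-! ### Auxiliary constructions for the proof -/

/-- The right spine with keys `a, a+1, …, a+m-1`. -/
def spine : ℕ → ℕ → BTree ℕ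
  | _, 0 => BTree.leaf
  | a, m + 1 => BTree.node BTree.leaf a (spine (a + 1) m)

lemma spine_keys : ∀ (m a : ℕ), (spine a m).keys = Finset.Ico a (a + m) := by
  intro m
  induction m with
  | zero => intro a; simp [spine, BTree.keys]
  | succ m ih =>
      intro a
      simp only [spine, BTree.keys, ih]
      ext x
      simp only [Finset.mem_insert, Finset.mem_union, Finset.mem_Ico, BTree.keys,
        Finset.notMem_empty, false_or]
      omega

lemma spine_isBST : ∀ (m a : ℕ), (spine a m).IsBST := by
  intro m
  induction m with
  | zero => intro a; simp [spine, BTree.IsBST]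
  | succ m ih =>
      intro a
      refine ⟨?_, ?_, trivial, ih (a + 1)⟩
      · simp [BTree.keys]
      · intro y hy
        rw [spine_keys] at hy
        simp only [Finset.mem_Ico] at hy
        omega

lemma spine_depth_root (m a : ℕ) (hm : 1 ≤ m) : (spine a m).depth a = 0 := by
  obtain ⟨m', rfl⟩ : ∃ m', m = m' + 1 := ⟨m - 1, by omega⟩
  simp [spine, BTree.depth]

lemma BTree_dist_self (T : BTree ℕ) (a : ℕ) : T.dist a a = 0 := by
  cases T <;> simp [BTree.dist]

lemma spine_dist : ∀ (m a c : ℕ), a ≤ c → c + 2 ≤ a + m →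
    (spine a m).dist c (c + 1) = 1 := by
  intro m
  induction m with
  | zero => intro a c h1 h2; omega
  | succ m ih =>
      intro a c h1 h2
      rcases Nat.lt_or_ge a c with hac | hac
      · show (BTree.node BTree.leaf a (spine (a + 1) m)).dist c (c + 1) = 1
        rw [BTree.dist]
        rw [if_neg (by omega), if_neg (by omega), if_pos ⟨hac, by omega⟩]
        exact ih (a + 1) c (by omega) (by omega)
      · have hca : a = c := by omega
        subst hca
        show (BTree.node BTree.leaf a (spine (a + 1) m)).dist a (a + 1) = 1
        rw [BTree.dist]
        rw [if_neg (by omega), if_neg (by omega), if_neg (by omega)]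
        have hm : 1 ≤ m := by omega
        simp only [BTree.depth, if_pos rfl, if_neg (show ¬ a + 1 = a by omega),
          if_neg (show ¬ a + 1 < a by omega)]
        rw [spine_depth_root m (a + 1) hm]
        simp

/-- Closed form for the access sequence. -/
def Xseq (k l t : ℕ) : ℕ := t % k * l + t / k + 1

lemma fingerPos_eq (k l : ℕ) (hk : 0 < k) (i : Fin k) (t : ℕ) :
    fingerPos (Xseq k l) (fun t => (⟨t % k, Nat.mod_lt t hk⟩ : Fin k))
      (fun j => j.val * l + 1) i t =
      if t ≤ i.val then i.val * l + 1
      else Xseq k l (i.val + k * ((t - i.val - 1) / k)) := by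
  induction t with
  | zero => simp [fingerPos]
  | succ t ih =>
      rw [fingerPos]
      by_cases h : t % k = i.val
      · have hfi : (⟨t % k, Nat.mod_lt t hk⟩ : Fin k) = i := Fin.ext h
        rw [if_pos hfi]
        have hle : i.val ≤ t := by rw [← h]; exact Nat.mod_le t k
        rw [if_neg (by omega)]
        have hdm := Nat.div_add_mod t k
        have hdvd : t - i.val = k * (t / k) := by omega
        have : (t + 1 - i.val - 1) / k = t / k := by
          rw [show t + 1 - i.val - 1 = t - i.val from by omega, hdvd,
            Nat.mul_div_cancel_left _ hk]
        rw [this]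
        congr 1
        omega
      · have hfi : (⟨t % k, Nat.mod_lt t hk⟩ : Fin k) ≠ i := by
          intro hc; exact h (congrArg Fin.val hc)
        rw [if_neg hfi, ih]
        by_cases h1 : t + 1 ≤ i.val
        · rw [if_pos h1, if_pos (by omega)]
        · rw [if_neg h1]
          by_cases h2 : t ≤ i.val
          · -- then t = i.val, but then t % k = i.val, contradiction
            exfalso
            have : t = i.val := by omega
            exact h (by rw [this, Nat.mod_eq_of_lt i.isLt])
          · rw [if_neg h2]
            congr 2
            -- (t + 1 - i - 1)/k = (t - i)/k, and (t - i - 1)/k = (t - i)/k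
            have hnd : ¬ k ∣ (t - i.val) := by
              rintro ⟨c, hc⟩
              have ht : t = i.val + k * c := by omega
              exact h (by rw [ht, Nat.add_mul_mod_self_left, Nat.mod_eq_of_lt i.isLt])
            have h2' : i.val < t := by omega
            have h4 : (t - i.val) / k = (t - i.val - 1) / k := by
              conv_lhs => rw [show t - i.val = (t - i.val - 1) + 1 from by omega]
              rw [Nat.succ_div,
                if_neg (by rwa [show t - i.val - 1 + 1 = t - i.val from by omega])]
              simp
            rw [show t + 1 - i.val - 1 = t - i.val from by omega, h4]

/-- There is an absolute constant `C` such that for every `k ≥ 2` and every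
`n = k·l` divisible by `k`, there is a BST `T` on `[n]` with `F^k_T(S_k) ≤ C·n`. -/
theorem stmt10 : ∃ C : ℕ, ∀ k l : ℕ, 2 ≤ k →
    ∃ T : BTree ℕ, T.IsBST ∧ T.keys = Finset.Icc 1 (k * l) ∧
      fingerOpt T k (k * l) (fun t => tiltedGrid k l (t + 1)) ≤ C * (k * l) := by
  refine ⟨2, fun k l hk => ?_⟩
  have hk0 : 0 < k := by omega
  refine ⟨spine 1 (k * l), spine_isBST _ _, ?_, ?_⟩
  · rw [spine_keys]
    ext x
    simp only [Finset.mem_Ico, Finset.mem_Icc]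
    omega
  · have hX : (fun t => tiltedGrid k l (t + 1)) = Xseq k l := by
      funext t
      simp [tiltedGrid, Xseq]
    rw [hX]
    have hmem : fingerCost (spine 1 (k * l)) k (k * l) (Xseq k l)
        (fun t => (⟨t % k, Nat.mod_lt t hk0⟩ : Fin k)) (fun j => j.val * l + 1) ∈
        {c : ℕ | ∃ f init, fingerCost (spine 1 (k * l)) k (k * l) (Xseq k l) f init = c} :=
      ⟨_, _, rfl⟩
    refine le_trans (Nat.sInf_le hmem) ?_
    rw [fingerCost]
    calc ∑ t ∈ Finset.range (k * l),
          (1 + (spine 1 (k * l)).dist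
            (fingerPos (Xseq k l) (fun t => (⟨t % k, Nat.mod_lt t hk0⟩ : Fin k))
              (fun j => j.val * l + 1)
              ((fun t => (⟨t % k, Nat.mod_lt t hk0⟩ : Fin k)) t) t) (Xseq k l t))
        ≤ ∑ _t ∈ Finset.range (k * l), 2 := by
          refine Finset.sum_le_sum fun t ht => ?_
          rw [Finset.mem_range] at ht
          have hrk : t % k < k := Nat.mod_lt t hk0
          have key : (spine 1 (k * l)).dist
              (fingerPos (Xseq k l) (fun t => (⟨t % k, Nat.mod_lt t hk0⟩ : Fin k))
                (fun j => j.val * l + 1) (⟨t % k, Nat.mod_lt t hk0⟩ : Fin k) t)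
              (Xseq k l t) ≤ 1 := by
            rw [fingerPos_eq k l hk0 (⟨t % k, Nat.mod_lt t hk0⟩ : Fin k) t]
            simp only
            by_cases hlt : t < k
            · have htk : t % k = t := Nat.mod_eq_of_lt hlt
              rw [if_pos (le_of_eq htk.symm)]
              have e1 : Xseq k l t = t % k * l + 1 := by
                unfold Xseq
                rw [Nat.div_eq_of_lt hlt]
              rw [e1, BTree_dist_self]
              omega
            · rw [if_neg (by omega)]
              have hq1 : 1 ≤ t / k := (Nat.one_le_div_iff hk0).mpr (by omega)
              have hql : t / k < l := (Nat.div_lt_iff_lt_mul hk0).mpr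
                (by rw [mul_comm]; exact ht)
              obtain ⟨q', hq'⟩ : ∃ q', t / k = q' + 1 := ⟨t / k - 1, by omega⟩
              have hT : k * q' + k + t % k = t := by
                have h := Nat.div_add_mod t k
                rw [hq'] at h
                calc k * q' + k + t % k = k * (q' + 1) + t % k := by ring
                  _ = t := h
              have h1 : (t - t % k - 1) / k = q' := by
                have e : t - t % k - 1 = (k - 1) + k * q' := by omega
                rw [e, Nat.add_mul_div_left _ _ hk0, Nat.div_eq_of_lt (by omega),
                  Nat.zero_add]
              rw [h1]
              have e2 : Xseq k l (t % k + k * q') = t % k * l + q' + 1 := by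
                unfold Xseq
                rw [Nat.add_mul_mod_self_left, Nat.add_mul_div_left _ _ hk0,
                  Nat.mod_eq_of_lt hrk, Nat.div_eq_of_lt hrk]
                ring
              have e3 : Xseq k l t = (t % k * l + q' + 1) + 1 := by
                unfold Xseq
                rw [hq']
                ring
              rw [e2, e3]
              have h5 : t % k * l + l ≤ k * l := by
                calc t % k * l + l = (t % k + 1) * l := by ring
                  _ ≤ k * l := Nat.mul_le_mul_right l (by omega)
              rw [spine_dist (k * l) 1 (t % k * l + q' + 1) (by omega) ?_]
              calc t % k * l + q' + 1 + 2 = t % k * l + (q' + 3) := by ring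
                _ ≤ t % k * l + (l + 1) := Nat.add_le_add_left (by omega) _
                _ = (t % k * l + l) + 1 := by ring
                _ ≤ k * l + 1 := Nat.add_le_add_right h5 1
                _ = 1 + k * l := by ring
          beta_reduce
          omega
      _ = 2 * (k * l) := by
          rw [Finset.sum_const, Finset.card_range, smul_eq_mul, mul_comm]
end

section
/- There exist constants c > 0 and C such that for every integer k ≥ 2 and every n divisible by k with n ≥ C·k⁴, every binary search tree T on [n] satisfies F^{k−1}_T(S_k) ≥ c·(n/k)·log₂(n/k), where S_k is the tilted-grid sequence of length n. -/
/-!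
In round `p` the `k` keys `b·ℓ + p + 1` (`b < k`) are accessed with only `k − 1` fingers, so
some finger moves from `a·ℓ + p + 1` to `b·ℓ + p + 1` with `a < b` and pays their distance in
`T`. Sorting the rounds by `(a, b)`, a class of `m` rounds is a family of pairs that straddle a
fixed cut and move monotonically. Along the search path of that cut, the two keys of a pair
leave the path at depths whose difference is at most their distance. Pairs whose depths differ
by more than `log m` pay `log m` each; the others form `O(log m)` groups in which both depths are
constant, so all pairs of a group separate at the same node and their distinct endpoints below
it have total depth at least `n log n − 2n`. A pigeonhole over the groups, and then over the
`k²` classes, gives `Ω(ℓ log ℓ)` as soon as `ℓ ≥ 64 k³`.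
-/

open Finset

theorem sum_mul_log_sub_le {ι : Type*} (s : Finset ι) (n : ι → ℕ) {e : ℕ}
    (hs : 2 * #s ≤ 2 ^ e) :
    (∑ i ∈ s, n i) * (Nat.log 2 (∑ i ∈ s, n i) - e) ≤
      2 * ∑ i ∈ s, n i * Nat.log 2 (n i) := by
  set M := ∑ i ∈ s, n i
  set L := Nat.log 2 M
  rcases le_or_gt L e with hLe | heL
  · simp [Nat.sub_eq_zero_of_le hLe]
  -- classes below the threshold `2 ^ (L - e)` carry at most half of the total mass
  have hsmall : 2 * ∑ i ∈ s with ¬2 ^ (L - e) ≤ n i, n i ≤ M := by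
    calc 2 * ∑ i ∈ s with ¬2 ^ (L - e) ≤ n i, n i
        ≤ 2 * (#s * 2 ^ (L - e)) := by
          gcongr
          calc ∑ i ∈ s with ¬2 ^ (L - e) ≤ n i, n i
              ≤ #{i ∈ s | ¬2 ^ (L - e) ≤ n i} • 2 ^ (L - e) :=
                sum_le_card_nsmul _ _ _ fun i hi => (not_le.mp (mem_filter.mp hi).2).le
            _ ≤ #s * 2 ^ (L - e) := by
                rw [smul_eq_mul]; gcongr; exact filter_subset _ _
      _ ≤ 2 ^ e * 2 ^ (L - e) := by rw [← mul_assoc]; gcongr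
      _ = 2 ^ L := by rw [← pow_add, Nat.add_sub_cancel' heL.le]
      _ ≤ M := Nat.pow_log_le_self 2 (by rintro h; simp [L, h] at heL)
  have hbig : M ≤ 2 * ∑ i ∈ s with 2 ^ (L - e) ≤ n i, n i := by
    have := sum_filter_add_sum_filter_not s (fun i => 2 ^ (L - e) ≤ n i) n
    omega
  calc M * (L - e) ≤ 2 * ∑ i ∈ s with 2 ^ (L - e) ≤ n i, n i * (L - e) := by
        rw [← sum_mul, ← mul_assoc]; gcongr
    _ ≤ 2 * ∑ i ∈ s with 2 ^ (L - e) ≤ n i, n i * Nat.log 2 (n i) := by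
        gcongr with i hi
        exact Nat.le_log_of_pow_le one_lt_two (mem_filter.mp hi).2
    _ ≤ 2 * ∑ i ∈ s, n i * Nat.log 2 (n i) := by
        gcongr
        exact filter_subset _ _

namespace BTree

variable {α : Type} [LinearOrder α]

theorem depth_node_of_lt {l r : BTree α} {x a : α} (h : a < x) :
    (node l x r).depth a = l.depth a + 1 := by
  simp [depth, h.ne, h]

theorem depth_node_of_gt {l r : BTree α} {x a : α} (h : x < a) :
    (node l x r).depth a = r.depth a + 1 := by
  simp [depth, h.ne', h.not_gt]

@[simp]
theorem dist_self (T : BTree α) (a : α) : T.dist a a = 0 := by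
  cases T <;> simp [dist]

theorem dist_node_of_lt_of_lt {l r : BTree α} {x a b : α} (ha : a < x) (hb : b < x) :
    (node l x r).dist a b = l.dist a b := by
  rcases eq_or_ne a b with rfl | hab
  · simp
  · simp [dist, hab, ha, hb]

theorem dist_node_of_gt_of_gt {l r : BTree α} {x a b : α} (ha : x < a) (hb : x < b) :
    (node l x r).dist a b = r.dist a b := by
  rcases eq_or_ne a b with rfl | hab
  · simp
  · simp [dist, hab, ha, hb, ha.not_gt]

theorem dist_node_of_le_of_le {l r : BTree α} {x a b : α} (ha : a ≤ x) (hb : x ≤ b) :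
    (node l x r).dist a b = (node l x r).depth a + (node l x r).depth b := by
  rcases eq_or_ne a b with rfl | hab
  · simp [depth, le_antisymm ha hb]
  · have h₁ : ¬(a < x ∧ b < x) := fun h => h.2.not_ge hb
    have h₂ : ¬(x < a ∧ x < b) := fun h => h.1.not_ge ha
    rw [dist, if_neg hab, if_neg h₁, if_neg h₂]

theorem mem_keys_of_lt {l r : BTree α} {x a : α} (hT : (node l x r).IsBST)
    (ha : a ∈ (node l x r).keys) (hax : a < x) : a ∈ l.keys := by
  simp only [keys, mem_insert, mem_union] at ha
  rcases ha with rfl | ha | ha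
  · exact absurd hax (lt_irrefl a)
  · exact ha
  · exact absurd (hT.2.1 a ha) hax.not_gt

theorem mem_keys_of_gt {l r : BTree α} {x a : α} (hT : (node l x r).IsBST)
    (ha : a ∈ (node l x r).keys) (hxa : x < a) : a ∈ r.keys := by
  simp only [keys, mem_insert, mem_union] at ha
  rcases ha with rfl | ha | ha
  · exact absurd hxa (lt_irrefl a)
  · exact absurd (hT.1 a ha) hxa.not_gt
  · exact ha

theorem card_filter_depth_le_lt (T : BTree α) (hT : T.IsBST) (D : ℕ) :
    #{a ∈ T.keys | T.depth a ≤ D} < 2 ^ (D + 1) := by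
  induction T generalizing D with
  | leaf => simp [keys]
  | node l x r ihl ihr =>
    obtain ⟨hl, hr, hTl, hTr⟩ := hT
    cases D with
    | zero =>
      have : {a ∈ (node l x r).keys | (node l x r).depth a ≤ 0} ⊆ {x} := by
        intro a ha
        simp only [mem_filter, nonpos_iff_eq_zero, depth] at ha
        split_ifs at ha with h <;> simp_all
      exact (card_le_card this).trans_lt (by simp)
    | succ D =>
      have hsub : {a ∈ (node l x r).keys | (node l x r).depth a ≤ D + 1} ⊆
          insert x ({a ∈ l.keys | l.depth a ≤ D} ∪ {a ∈ r.keys | r.depth a ≤ D}) := by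
        intro a ha
        simp only [mem_filter, keys, mem_insert, mem_union] at ha ⊢
        obtain ⟨rfl | ha | ha, hd⟩ := ha
        · exact Or.inl rfl
        · rw [depth_node_of_lt (hl a ha)] at hd
          exact Or.inr (Or.inl ⟨ha, by omega⟩)
        · rw [depth_node_of_gt (hr a ha)] at hd
          exact Or.inr (Or.inr ⟨ha, by omega⟩)
      have := (card_le_card hsub).trans ((card_insert_le _ _).trans
        (Nat.add_le_add_right (card_union_le _ _) 1))
      have := ihl hTl D
      have := ihr hTr D
      rw [pow_succ]
      omega

theorem mul_card_le_sum_depth_add (T : BTree α) (hT : T.IsBST) {S : Finset α}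
    (hS : S ⊆ T.keys) (t : ℕ) : t * #S ≤ ∑ a ∈ S, T.depth a + 2 ^ (t + 1) := by
  suffices h : t * #S ≤ ∑ a ∈ S, min (T.depth a) t + 2 ^ (t + 1) from
    h.trans (by gcongr; exact min_le_left _ _)
  induction t with
  | zero => simp
  | succ t ih =>
    have hmin : ∑ a ∈ S, min (T.depth a) (t + 1) =
        ∑ a ∈ S, min (T.depth a) t + #{a ∈ S | ¬T.depth a ≤ t} := by
      rw [card_filter, ← sum_add_distrib]
      refine sum_congr rfl fun a _ => ?_
      split_ifs <;> omega
    have hshallow : #{a ∈ S | T.depth a ≤ t} < 2 ^ (t + 1) :=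
      (card_le_card (filter_subset_filter _ hS)).trans_lt (card_filter_depth_le_lt T hT t)
    have := card_filter_add_card_filter_not (s := S) (fun a => T.depth a ≤ t)
    rw [hmin, pow_succ 2 (t + 1)]
    nlinarith

theorem card_mul_log_card_le_sum_depth (T : BTree α) (hT : T.IsBST) {ι : Type*} {P : Finset ι}
    {w : ι → α} (hw : ∀ p ∈ P, w p ∈ T.keys) (hinj : Set.InjOn w P) :
    #P * Nat.log 2 #P ≤ ∑ p ∈ P, T.depth (w p) + 2 * #P := by
  rcases P.eq_empty_or_nonempty with rfl | hne
  · simp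
  have hS : P.image w ⊆ T.keys := by simpa [subset_iff] using hw
  have h := mul_card_le_sum_depth_add T hT hS (Nat.log 2 #P)
  rw [card_image_of_injOn hinj, sum_image hinj, pow_succ] at h
  have : 2 ^ Nat.log 2 #P ≤ #P := Nat.pow_log_le_self 2 hne.card_pos.ne'
  linarith [mul_comm (#P) (Nat.log 2 #P)]

/-- Following the search path of the cut between the keys `≤ c` and the keys `> c`,
`T.cutDepth c a` is the number of nodes visited until (and including) the first node at
which the search for `a` leaves that path. -/
def cutDepth (c : α) : BTree α → α → ℕ
  | .leaf, _ => 0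
  | .node l x r, a =>
      if x ≤ c then (if x < a then cutDepth c r a + 1 else 1)
      else (if a < x then cutDepth c l a + 1 else 1)

section cutDepth

variable {c x a : α} {l r : BTree α}

theorem cutDepth_node_of_le_of_lt (hx : x ≤ c) (ha : x < a) :
    (node l x r).cutDepth c a = r.cutDepth c a + 1 := by
  simp [cutDepth, hx, ha]

theorem cutDepth_node_of_le_of_le (hx : x ≤ c) (ha : a ≤ x) :
    (node l x r).cutDepth c a = 1 := by
  simp [cutDepth, hx, ha.not_gt]

theorem cutDepth_node_of_gt_of_lt (hx : c < x) (ha : a < x) :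
    (node l x r).cutDepth c a = l.cutDepth c a + 1 := by
  simp [cutDepth, hx.not_ge, ha]

theorem cutDepth_node_of_gt_of_ge (hx : c < x) (ha : x ≤ a) :
    (node l x r).cutDepth c a = 1 := by
  simp [cutDepth, hx.not_ge, ha.not_gt]

theorem one_le_cutDepth_of_mem_keys {T : BTree α} (ha : a ∈ T.keys) : 1 ≤ T.cutDepth c a := by
  cases T with
  | leaf => simp [keys] at ha
  | node l x r => simp only [cutDepth]; split_ifs <;> omega

theorem cutDepth_le_depth_add_one (T : BTree α) (c a : α) : T.cutDepth c a ≤ T.depth a + 1 := by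
  induction T with
  | leaf => simp [cutDepth]
  | node l x r ihl ihr =>
    simp only [cutDepth, depth]
    split_ifs <;> first | omega | order

theorem abs_cutDepth_sub_cutDepth_le_dist (T : BTree α) {u v : α} (hu : u ≤ c) (hv : c < v) :
    |(T.cutDepth c u : ℤ) - T.cutDepth c v| ≤ T.dist u v := by
  induction T with
  | leaf => simp [cutDepth]
  | node l x r ihl ihr =>
    rw [abs_sub_le_iff]
    by_cases hx : x ≤ c
    · have hxv : x < v := hx.trans_lt hv
      rw [cutDepth_node_of_le_of_lt hx hxv]
      rcases lt_or_ge x u with hxu | hux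
      · rw [cutDepth_node_of_le_of_lt hx hxu, dist_node_of_gt_of_gt hxu hxv]
        rw [abs_sub_le_iff] at ihr
        omega
      · rw [cutDepth_node_of_le_of_le hx hux, dist_node_of_le_of_le hux hxv.le,
          depth_node_of_gt hxv]
        have := cutDepth_le_depth_add_one r c v
        omega
    · have hux : u < x := hu.trans_lt (not_le.mp hx)
      rw [cutDepth_node_of_gt_of_lt (not_le.mp hx) hux]
      rcases lt_or_ge v x with hvx | hxv
      · rw [cutDepth_node_of_gt_of_lt (not_le.mp hx) hvx, dist_node_of_lt_of_lt hux hvx]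
        rw [abs_sub_le_iff] at ihl
        omega
      · rw [cutDepth_node_of_gt_of_ge (not_le.mp hx) hxv, dist_node_of_le_of_le hux.le hxv,
          depth_node_of_lt hux]
        have := cutDepth_le_depth_add_one l c u
        omega

theorem monotoneOn_cutDepth (T : BTree α) (c : α) : MonotoneOn (T.cutDepth c) (Set.Iic c) := by
  intro a ha a' ha' haa'
  induction T with
  | leaf => simp [cutDepth]
  | node l x r ihl ihr =>
    simp only [Set.mem_Iic] at ha ha'
    simp only [cutDepth]
    split_ifs <;> first | omega | order

theorem antitoneOn_cutDepth (T : BTree α) (c : α) : AntitoneOn (T.cutDepth c) (Set.Ioi c) := by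
  intro b hb b' hb' hbb'
  induction T with
  | leaf => simp [cutDepth]
  | node l x r ihl ihr =>
    simp only [Set.mem_Ioi] at hb hb'
    simp only [cutDepth]
    split_ifs <;> first | omega | order

theorem le_of_cutDepth_node_eq_one (hT : (node l x r).IsBST) (hx : x ≤ c)
    (ha : a ∈ (node l x r).keys) (h : (node l x r).cutDepth c a = 1) : a ≤ x := by
  by_contra! hxa
  rw [cutDepth_node_of_le_of_lt hx hxa] at h
  have := one_le_cutDepth_of_mem_keys (c := c) (mem_keys_of_gt hT ha hxa)
  omega

theorem ge_of_cutDepth_node_eq_one (hT : (node l x r).IsBST) (hx : c < x)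
    (ha : a ∈ (node l x r).keys) (h : (node l x r).cutDepth c a = 1) : x ≤ a := by
  by_contra! hax
  rw [cutDepth_node_of_gt_of_lt hx hax] at h
  have := one_le_cutDepth_of_mem_keys (c := c) (mem_keys_of_lt hT ha hax)
  omega

theorem card_mul_log_card_le_sum_dist_of_cutDepth_eq (T : BTree α) (hT : T.IsBST)
    {ι : Type*} {P : Finset ι} {u v : ι → α}
    (hu : ∀ p ∈ P, u p ∈ T.keys ∧ u p ≤ c) (hv : ∀ p ∈ P, v p ∈ T.keys ∧ c < v p)
    (hu_inj : Set.InjOn u P) (hv_inj : Set.InjOn v P) {A B : ℕ}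
    (hA : ∀ p ∈ P, T.cutDepth c (u p) = A) (hB : ∀ p ∈ P, T.cutDepth c (v p) = B) :
    #P * Nat.log 2 #P ≤ ∑ p ∈ P, T.dist (u p) (v p) + 2 * #P := by
  induction T generalizing A B with
  | leaf =>
    rcases P.eq_empty_or_nonempty with rfl | ⟨p, hp⟩
    · simp
    · simpa [keys] using (hu p hp).1
  | node l x r ihl ihr =>
    by_cases hx : x ≤ c
    · have hxv : ∀ p ∈ P, x < v p := fun p hp => hx.trans_lt (hv p hp).2
      by_cases hA₁ : A = 1
      · have hux : ∀ p ∈ P, u p ≤ x := fun p hp =>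
          le_of_cutDepth_node_eq_one hT hx (hu p hp).1 ((hA p hp).trans hA₁)
        calc #P * Nat.log 2 #P ≤ ∑ p ∈ P, (node l x r).depth (u p) + 2 * #P :=
              card_mul_log_card_le_sum_depth _ hT (fun p hp => (hu p hp).1) hu_inj
          _ ≤ _ := by
            gcongr with p hp
            rw [dist_node_of_le_of_le (hux p hp) (hxv p hp).le]
            omega
      · have hxu : ∀ p ∈ P, x < u p := fun p hp => lt_of_not_ge fun h =>
          hA₁ (by rw [← hA p hp, cutDepth_node_of_le_of_le hx h])
        rw [sum_congr rfl fun p hp => dist_node_of_gt_of_gt (hxu p hp) (hxv p hp)]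
        refine ihr hT.2.2.2 (A := A - 1) (B := B - 1)
          (fun p hp => ⟨mem_keys_of_gt hT (hu p hp).1 (hxu p hp), (hu p hp).2⟩)
          (fun p hp => ⟨mem_keys_of_gt hT (hv p hp).1 (hxv p hp), (hv p hp).2⟩)
          (fun p hp => ?_) (fun p hp => ?_)
        · rw [← hA p hp, cutDepth_node_of_le_of_lt hx (hxu p hp), Nat.add_sub_cancel]
        · rw [← hB p hp, cutDepth_node_of_le_of_lt hx (hxv p hp), Nat.add_sub_cancel]
    · have hcx : c < x := not_le.mp hx
      have hux : ∀ p ∈ P, u p < x := fun p hp => (hu p hp).2.trans_lt hcx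
      by_cases hB₁ : B = 1
      · have hxv : ∀ p ∈ P, x ≤ v p := fun p hp =>
          ge_of_cutDepth_node_eq_one hT hcx (hv p hp).1 ((hB p hp).trans hB₁)
        calc #P * Nat.log 2 #P ≤ ∑ p ∈ P, (node l x r).depth (v p) + 2 * #P :=
              card_mul_log_card_le_sum_depth _ hT (fun p hp => (hv p hp).1) hv_inj
          _ ≤ _ := by
            gcongr with p hp
            rw [dist_node_of_le_of_le (hux p hp).le (hxv p hp)]
            omega
      · have hvx : ∀ p ∈ P, v p < x := fun p hp => lt_of_not_ge fun h =>
          hB₁ (by rw [← hB p hp, cutDepth_node_of_gt_of_ge hcx h])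
        rw [sum_congr rfl fun p hp => dist_node_of_lt_of_lt (hux p hp) (hvx p hp)]
        refine ihl hT.2.2.1 (A := A - 1) (B := B - 1)
          (fun p hp => ⟨mem_keys_of_lt hT (hu p hp).1 (hux p hp), (hu p hp).2⟩)
          (fun p hp => ⟨mem_keys_of_lt hT (hv p hp).1 (hvx p hp), (hv p hp).2⟩)
          (fun p hp => ?_) (fun p hp => ?_)
        · rw [← hA p hp, cutDepth_node_of_gt_of_lt hcx (hux p hp), Nat.add_sub_cancel]
        · rw [← hB p hp, cutDepth_node_of_gt_of_lt hcx (hvx p hp), Nat.add_sub_cancel]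

theorem card_mul_log_card_le_sum_dist_of_cutDepth_sub_eq (T : BTree α) (hT : T.IsBST)
    {ι : Type*} [LinearOrder ι] {P : Finset ι} {u v : ι → α}
    (hu : ∀ p ∈ P, u p ∈ T.keys ∧ u p ≤ c) (hv : ∀ p ∈ P, v p ∈ T.keys ∧ c < v p)
    (hu_mono : StrictMonoOn u P) (hv_mono : StrictMonoOn v P) {i : ℤ}
    (hi : ∀ p ∈ P, (T.cutDepth c (u p) : ℤ) - T.cutDepth c (v p) = i) :
    #P * Nat.log 2 #P ≤ ∑ p ∈ P, T.dist (u p) (v p) + 2 * #P := by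
  rcases P.eq_empty_or_nonempty with rfl | ⟨p₀, hp₀⟩
  · simp
  -- along `P` the first cut depth weakly increases and the second weakly decreases, so
  -- a constant difference forces both to be constant
  have hconst : ∀ p ∈ P, T.cutDepth c (u p) = T.cutDepth c (u p₀) ∧
      T.cutDepth c (v p) = T.cutDepth c (v p₀) := by
    intro p hp
    have hmono : ∀ q ∈ P, ∀ q' ∈ P, q ≤ q' →
        T.cutDepth c (u q) ≤ T.cutDepth c (u q') ∧ T.cutDepth c (v q') ≤ T.cutDepth c (v q) :=
      fun q hq q' hq' hqq' =>
        ⟨monotoneOn_cutDepth T c (hu q hq).2 (hu q' hq').2 (hu_mono.monotoneOn hq hq' hqq'),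
          antitoneOn_cutDepth T c (hv q hq).2 (hv q' hq').2 (hv_mono.monotoneOn hq hq' hqq')⟩
    have := hi p hp
    have := hi p₀ hp₀
    rcases le_total p p₀ with h | h
    · have := hmono p hp p₀ hp₀ h
      omega
    · have := hmono p₀ hp₀ p hp h
      omega
  exact card_mul_log_card_le_sum_dist_of_cutDepth_eq T hT hu hv hu_mono.injOn hv_mono.injOn
    (fun p hp => (hconst p hp).1) (fun p hp => (hconst p hp).2)

theorem card_mul_log_card_sub_le_of_abs_cutDepth_sub_le (T : BTree α) (hT : T.IsBST)
    {ι : Type*} [LinearOrder ι] {P : Finset ι} {u v : ι → α}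
    (hu : ∀ p ∈ P, u p ∈ T.keys ∧ u p ≤ c) (hv : ∀ p ∈ P, v p ∈ T.keys ∧ c < v p)
    (hu_mono : StrictMonoOn u P) (hv_mono : StrictMonoOn v P) {K e : ℕ}
    (hK : ∀ p ∈ P, |(T.cutDepth c (u p) : ℤ) - T.cutDepth c (v p)| ≤ K)
    (he : 2 * (2 * K + 1) ≤ 2 ^ e) :
    #P * (Nat.log 2 #P - e) ≤ 2 * ∑ p ∈ P, T.dist (u p) (v p) + 4 * #P := by
  set d : ι → ℤ := fun p => (T.cutDepth c (u p) : ℤ) - T.cutDepth c (v p)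
  have hmaps : Set.MapsTo d P (Icc (-K : ℤ) K) := fun p hp => mem_Icc.mpr (abs_le.mp (hK p hp))
  have hfiber : ∀ i, #{p ∈ P | d p = i} * Nat.log 2 #{p ∈ P | d p = i} ≤
      ∑ p ∈ P with d p = i, T.dist (u p) (v p) + 2 * #{p ∈ P | d p = i} := fun i =>
    card_mul_log_card_le_sum_dist_of_cutDepth_sub_eq T hT
      (fun p hp => hu p (mem_filter.mp hp).1) (fun p hp => hv p (mem_filter.mp hp).1)
      (hu_mono.mono (coe_subset.mpr (filter_subset _ _)))
      (hv_mono.mono (coe_subset.mpr (filter_subset _ _)))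
      (fun p hp => (mem_filter.mp hp).2)
  calc #P * (Nat.log 2 #P - e)
      = (∑ i ∈ Icc (-K : ℤ) K, #{p ∈ P | d p = i}) *
          (Nat.log 2 (∑ i ∈ Icc (-K : ℤ) K, #{p ∈ P | d p = i}) - e) := by
        rw [← card_eq_sum_card_fiberwise hmaps]
    _ ≤ 2 * ∑ i ∈ Icc (-K : ℤ) K, #{p ∈ P | d p = i} * Nat.log 2 #{p ∈ P | d p = i} :=
        sum_mul_log_sub_le _ _ (by rw [Int.card_Icc]; omega)
    _ ≤ 2 * ∑ i ∈ Icc (-K : ℤ) K,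
          (∑ p ∈ P with d p = i, T.dist (u p) (v p) + 2 * #{p ∈ P | d p = i}) := by
        gcongr with i
        exact hfiber i
    _ = 2 * ∑ p ∈ P, T.dist (u p) (v p) + 4 * #P := by
        rw [sum_add_distrib, sum_fiberwise_of_maps_to hmaps, ← mul_sum,
          ← card_eq_sum_card_fiberwise hmaps]
        ring

theorem card_mul_log_card_le_sum_dist (T : BTree α) (hT : T.IsBST)
    {ι : Type*} [LinearOrder ι] {P : Finset ι} {u v : ι → α}
    (hu : ∀ p ∈ P, u p ∈ T.keys ∧ u p ≤ c) (hv : ∀ p ∈ P, v p ∈ T.keys ∧ c < v p)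
    (hu_mono : StrictMonoOn u P) (hv_mono : StrictMonoOn v P) :
    #P * Nat.log 2 #P ≤ 8 * ∑ p ∈ P, T.dist (u p) (v p) + 32 * #P := by
  set L := Nat.log 2 #P
  set J := {p ∈ P | |(T.cutDepth c (u p) : ℤ) - T.cutDepth c (v p)| ≤ (L + 1 : ℕ)}
  have hJ : J ⊆ P := filter_subset _ _
  have hDJ : ∑ p ∈ J, T.dist (u p) (v p) ≤ ∑ p ∈ P, T.dist (u p) (v p) :=
    sum_le_sum_of_subset hJ
  rcases le_or_gt (2 * #J) #P with hfar | hnear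
  · -- at least half of the pairs have cut depths more than `L + 1` apart
    have hdist : ∀ p ∈ P \ J, L + 2 ≤ T.dist (u p) (v p) := by
      intro p hp
      obtain ⟨hpP, hpJ⟩ := mem_sdiff.mp hp
      have h := abs_cutDepth_sub_cutDepth_le_dist T (hu p hpP).2 (hv p hpP).2
      have hpJ' : ¬|(T.cutDepth c (u p) : ℤ) - T.cutDepth c (v p)| ≤ L + 1 := by
        exact_mod_cast fun h => hpJ (mem_filter.mpr ⟨hpP, h⟩)
      omega
    have := (card_nsmul_le_sum _ _ _ hdist).trans (sum_le_sum_of_subset (sdiff_subset (t := J)))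
    rw [smul_eq_mul, card_sdiff_of_subset hJ] at this
    have : #P ≤ 2 * (#P - #J) := by omega
    nlinarith
  · have hJ_bound := card_mul_log_card_sub_le_of_abs_cutDepth_sub_le T hT (P := J)
      (fun p hp => hu p (hJ hp)) (fun p hp => hv p (hJ hp))
      (hu_mono.mono (coe_subset.mpr hJ)) (hv_mono.mono (coe_subset.mpr hJ))
      (fun p hp => (mem_filter.mp hp).2) (e := L / 2 + 4)
      (by have := Nat.lt_two_pow_self (n := L / 2); rw [pow_add]; omega)
    have hlog : L ≤ Nat.log 2 #J + 1 := by
      calc L ≤ Nat.log 2 (#J * 2) := Nat.log_mono_right (by omega)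
        _ = Nat.log 2 #J + 1 := Nat.log_mul_base one_lt_two (by omega)
    have hL : L ≤ 2 * (Nat.log 2 #J - (L / 2 + 4)) + 11 := by omega
    have hJP : #J ≤ #P := card_le_card hJ
    nlinarith

end cutDepth

end BTree

theorem sum_range_mul_eq_sum_sum {M : Type*} [AddCommMonoid M] (k l : ℕ) (g : ℕ → M) :
    ∑ t ∈ range (k * l), g t = ∑ p ∈ range l, ∑ b ∈ range k, g (p * k + b) := by
  induction l with
  | zero => simp
  | succ l ih => rw [Nat.mul_succ, sum_range_add, ih, sum_range_succ, mul_comm k l]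

theorem exists_fingerPos_eq_of_lt {α : Type} {m : ℕ} (X : ℕ → α) (f : ℕ → Fin m)
    (init : Fin m → α) {a t : ℕ} (hat : a < t) :
    ∃ s, a ≤ s ∧ s < t ∧ fingerPos X f init (f a) t = X s := by
  induction t with
  | zero => omega
  | succ t ih =>
    by_cases hft : f t = f a
    · exact ⟨t, by omega, by omega, by simp [fingerPos, hft]⟩
    · have hat : a < t := by
        rcases Nat.lt_succ_iff_lt_or_eq.mp hat with h | rfl
        · exact h
        · exact absurd rfl hft
      obtain ⟨s, has, hst, hs⟩ := ih hat
      exact ⟨s, has, by omega, by simp [fingerPos, hft, hs]⟩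

theorem exists_fingerPos_eq_in_window {α : Type} {m : ℕ} (X : ℕ → α) (f : ℕ → Fin m)
    (init : Fin m → α) (t₀ : ℕ) {w : ℕ} (hw : m < w) :
    ∃ a b, a < b ∧ b < w ∧ fingerPos X f init (f (t₀ + b)) (t₀ + b) = X (t₀ + a) := by
  obtain ⟨b₁, hb₁, b₂, hb₂, hne, heq⟩ := exists_ne_map_eq_of_card_lt_of_maps_to
    (by simpa using hw) (f := fun b => f (t₀ + b)) (s := range w) (t := univ)
    (fun _ _ => mem_coe.mpr (mem_univ _))
  rw [mem_range] at hb₁ hb₂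
  wlog h : b₁ < b₂ generalizing b₁ b₂
  · exact this b₂ hb₂ b₁ hb₁ hne.symm heq.symm (lt_of_le_of_ne (not_lt.mp h) hne.symm)
  obtain ⟨s, hs₁, hs₂, hs⟩ :=
    exists_fingerPos_eq_of_lt X f init (show t₀ + b₁ < t₀ + b₂ by omega)
  refine ⟨s - t₀, b₂, by omega, hb₂, ?_⟩
  rw [← heq, hs, Nat.add_sub_cancel' (by omega)]

theorem tiltedGrid_mul_add_succ {k l p b : ℕ} (hb : b < k) :
    tiltedGrid k l (p * k + b + 1) = b * l + p + 1 := by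
  have hk : 0 < k := by omega
  simp only [tiltedGrid, Nat.add_sub_cancel]
  rw [Nat.add_comm (p * k), Nat.add_mul_mod_self_right, Nat.mod_eq_of_lt hb,
    Nat.add_mul_div_right _ _ hk, Nat.div_eq_of_lt hb, zero_add]

theorem exists_sum_dist_le_fingerCost_tiltedGrid (T : BTree ℕ) {m k : ℕ} (hmk : m < k) (l : ℕ)
    (f : ℕ → Fin m) (init : Fin m → ℕ) :
    ∃ q : ℕ → ℕ × ℕ, (∀ p, (q p).1 < (q p).2 ∧ (q p).2 < k) ∧
      ∑ p ∈ range l, (1 + T.dist ((q p).1 * l + p + 1) ((q p).2 * l + p + 1)) ≤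
        fingerCost T m (k * l) (fun t => tiltedGrid k l (t + 1)) f init := by
  set X : ℕ → ℕ := fun t => tiltedGrid k l (t + 1)
  have hX : ∀ p b, b < k → X (p * k + b) = b * l + p + 1 := fun p b hb =>
    tiltedGrid_mul_add_succ hb
  -- round `p` accesses `k` keys with `m < k` fingers, so some finger serves two of them
  have hround : ∀ p, ∃ q : ℕ × ℕ, (q.1 < q.2 ∧ q.2 < k) ∧
      1 + T.dist (q.1 * l + p + 1) (q.2 * l + p + 1) ≤
        ∑ b ∈ range k,
          (1 + T.dist (fingerPos X f init (f (p * k + b)) (p * k + b)) (X (p * k + b))) := by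
    intro p
    obtain ⟨a, b, hab, hbk, hpos⟩ := exists_fingerPos_eq_in_window X f init (p * k) hmk
    refine ⟨(a, b), ⟨hab, hbk⟩, ?_⟩
    have := single_le_sum (f := fun b =>
        1 + T.dist (fingerPos X f init (f (p * k + b)) (p * k + b)) (X (p * k + b)))
      (fun _ _ => Nat.zero_le _) (mem_range.mpr hbk)
    simpa only [hpos, hX p a (hab.trans hbk), hX p b hbk] using this
  choose q hq hcost using hround
  refine ⟨q, hq, ?_⟩
  rw [fingerCost, sum_range_mul_eq_sum_sum]
  exact sum_le_sum fun p _ => hcost p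

theorem mul_log_sub_le_sum_dist_of_grid (T : BTree ℕ) (hT : T.IsBST) {k l : ℕ}
    (hkeys : T.keys = Icc 1 (k * l)) (q : ℕ → ℕ × ℕ)
    (hq : ∀ p, (q p).1 < (q p).2 ∧ (q p).2 < k) :
    l * (Nat.log 2 l - (2 * Nat.log 2 k + 3)) ≤
      16 * ∑ p ∈ range l, T.dist ((q p).1 * l + p + 1) ((q p).2 * l + p + 1) + 64 * l := by
  set u : ℕ → ℕ := fun p => (q p).1 * l + p + 1
  set v : ℕ → ℕ := fun p => (q p).2 * l + p + 1
  set Q := range k ×ˢ range k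
  have hmaps : Set.MapsTo q (range l) Q := fun p _ => by
    simp only [Q, coe_product, coe_range, Set.mem_prod, Set.mem_Iio]
    exact ⟨(hq p).1.trans (hq p).2, (hq p).2⟩
  -- the rounds with `q p = r` form pairs straddling the cut after the block `r.1`
  have hclass : ∀ r, #{p ∈ range l | q p = r} * Nat.log 2 #{p ∈ range l | q p = r} ≤
      8 * ∑ p ∈ range l with q p = r, T.dist (u p) (v p) + 32 * #{p ∈ range l | q p = r} := by
    intro r
    have hrange : ∀ p ∈ {p ∈ range l | q p = r}, p < l ∧ u p = r.1 * l + p + 1 ∧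
        v p = r.2 * l + p + 1 ∧ r.1 < r.2 ∧ r.2 < k := by
      intro p hp
      obtain ⟨hpl, rfl⟩ := mem_filter.mp hp
      exact ⟨mem_range.mp hpl, rfl, rfl, hq p⟩
    refine T.card_mul_log_card_le_sum_dist hT (c := (r.1 + 1) * l)
      (fun p hp => ?_) (fun p hp => ?_) (fun p hp p' hp' hpp' => ?_) (fun p hp p' hp' hpp' => ?_)
    · obtain ⟨hpl, hu, -, h₁₂, h₂k⟩ := hrange p hp
      have : (r.1 + 1) * l ≤ k * l := Nat.mul_le_mul_right l (by omega)
      rw [add_one_mul] at *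
      simp only [hkeys, mem_Icc, hu]
      omega
    · obtain ⟨hpl, -, hv, h₁₂, h₂k⟩ := hrange p hp
      have : (r.2 + 1) * l ≤ k * l := Nat.mul_le_mul_right l (by omega)
      have : (r.1 + 1) * l ≤ r.2 * l := Nat.mul_le_mul_right l (by omega)
      rw [add_one_mul] at *
      simp only [hkeys, mem_Icc, hv]
      omega
    · rw [(hrange p hp).2.1, (hrange p' hp').2.1]
      omega
    · rw [(hrange p hp).2.2.1, (hrange p' hp').2.2.1]
      omega
  have hQ : 2 * #Q ≤ 2 ^ (2 * Nat.log 2 k + 3) := by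
    have hk : k < 2 ^ (Nat.log 2 k + 1) := Nat.lt_pow_succ_log_self one_lt_two k
    calc 2 * #Q = 2 * (k * k) := by simp [Q]
      _ ≤ 2 * (2 ^ (Nat.log 2 k + 1) * 2 ^ (Nat.log 2 k + 1)) := by gcongr
      _ = 2 ^ (2 * Nat.log 2 k + 3) := by ring
  calc l * (Nat.log 2 l - (2 * Nat.log 2 k + 3))
      = (∑ r ∈ Q, #{p ∈ range l | q p = r}) *
          (Nat.log 2 (∑ r ∈ Q, #{p ∈ range l | q p = r}) - (2 * Nat.log 2 k + 3)) := by
        rw [← card_eq_sum_card_fiberwise hmaps, card_range]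
    _ ≤ 2 * ∑ r ∈ Q, #{p ∈ range l | q p = r} * Nat.log 2 #{p ∈ range l | q p = r} :=
        sum_mul_log_sub_le _ _ hQ
    _ ≤ 2 * ∑ r ∈ Q, (8 * ∑ p ∈ range l with q p = r, T.dist (u p) (v p) +
          32 * #{p ∈ range l | q p = r}) := by
        gcongr with r
        exact hclass r
    _ = 16 * ∑ p ∈ range l, T.dist (u p) (v p) + 64 * l := by
        rw [sum_add_distrib, ← mul_sum, ← mul_sum, sum_fiberwise_of_maps_to hmaps,
          ← card_eq_sum_card_fiberwise hmaps, card_range]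
        ring

theorem log_le_three_mul_log_sub {k l : ℕ} (hk : k ≠ 0) (hl : 64 * k ^ 3 ≤ l) :
    Nat.log 2 l ≤ 3 * (Nat.log 2 l - (2 * Nat.log 2 k + 3)) := by
  have : 2 ^ (6 + 3 * Nat.log 2 k) ≤ l :=
    calc 2 ^ (6 + 3 * Nat.log 2 k) = 64 * (2 ^ Nat.log 2 k) ^ 3 := by ring
      _ ≤ 64 * k ^ 3 := by gcongr; exact Nat.pow_log_le_self 2 hk
      _ ≤ l := hl
  have := Nat.le_log_of_pow_le one_lt_two this
  omega

theorem exists_fingerCost_eq_fingerOpt {α : Type} [LinearOrder α] [Nonempty α] (T : BTree α)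
    {k : ℕ} (hk : 0 < k) (m : ℕ) (X : ℕ → α) :
    ∃ f init, fingerCost T k m X f init = fingerOpt T k m X := by
  have : fingerOpt T k m X ∈ {c | ∃ f init, fingerCost T k m X f init = c} :=
    Nat.sInf_mem ⟨_, fun _ => ⟨0, hk⟩, fun _ => Classical.arbitrary α, rfl⟩
  exact this

theorem mul_log_add_le_fingerOpt_tiltedGrid {k l : ℕ} (hk : 2 ≤ k) (hl : 64 * k ^ 3 ≤ l)
    (T : BTree ℕ) (hT : T.IsBST) (hkeys : T.keys = Icc 1 (k * l)) :
    l * Nat.log 2 l + l ≤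
      200 * fingerOpt T (k - 1) (k * l) (fun t => tiltedGrid k l (t + 1)) := by
  obtain ⟨f, init, hopt⟩ := exists_fingerCost_eq_fingerOpt T (k := k - 1) (by omega) (k * l)
    (fun t => tiltedGrid k l (t + 1))
  obtain ⟨q, hq, hcost⟩ :=
    exists_sum_dist_le_fingerCost_tiltedGrid T (k := k) (by omega) l f init
  have hgrid := mul_log_sub_le_sum_dist_of_grid T hT hkeys q hq
  have hlog := Nat.mul_le_mul_left l (log_le_three_mul_log_sub (by omega) hl)
  rw [sum_add_distrib, sum_const, card_range, smul_eq_mul, mul_one, hopt] at hcost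
  set D := ∑ p ∈ range l, T.dist ((q p).1 * l + p + 1) ((q p).2 * l + p + 1)
  set X := Nat.log 2 l - (2 * Nat.log 2 k + 3)
  linarith

/-- There are constants `c > 0` and `C` such that for every `k ≥ 2` and
every `n = k·l` divisible by `k` with `n ≥ C·k⁴`, every BST `T` on `[n]` satisfies
`F^{k−1}_T(S_k) ≥ c·(n/k)·log₂(n/k)` (note `n/k = l`). -/
theorem stmt11 : ∃ c : ℝ, 0 < c ∧ ∃ C : ℝ, ∀ k l : ℕ, 2 ≤ k →
    C * (k : ℝ) ^ 4 ≤ ((k * l : ℕ) : ℝ) →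
    ∀ T : BTree ℕ, T.IsBST → T.keys = Finset.Icc 1 (k * l) →
      c * (l : ℝ) * Real.logb 2 (l : ℝ) ≤
        (fingerOpt T (k - 1) (k * l) (fun t => tiltedGrid k l (t + 1)) : ℝ) := by
  refine ⟨1 / 200, by norm_num, 64, fun k l hk hC T hT hkeys => ?_⟩
  have hl : 64 * k ^ 3 ≤ l := by
    have hk₀ : (0 : ℝ) < k := by positivity
    have : ((64 * k ^ 3 : ℕ) : ℝ) * k ≤ l * k := by push_cast at hC ⊢; linarith
    exact_mod_cast le_of_mul_le_mul_right this hk₀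
  have hbound : (l : ℝ) * Nat.log 2 l + l ≤
      200 * (fingerOpt T (k - 1) (k * l) (fun t => tiltedGrid k l (t + 1)) : ℝ) := by
    exact_mod_cast mul_log_add_le_fingerOpt_tiltedGrid hk hl T hT hkeys
  have hlogb : Real.logb 2 l ≤ Nat.log 2 l + 1 := by
    have := (Nat.lt_floor_add_one (Real.logb 2 l)).le
    rwa [← Nat.cast_ofNat, Real.natFloor_logb_natCast] at this
  have : (l : ℝ) * Real.logb 2 l ≤ l * (Nat.log 2 l + 1) := by gcongr
  linarith
end
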